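/- Let r : ℝ → ℝ³ satisfy ‖r(t)‖ = 1 for all t, let z(t) = ⟪r(t), e₃⟫, and suppose at time t₀ we have z(t₀) = 0, ż(t₀) = 0, and the equation m·r̈(t₀) = λ(t₀)·r(t₀) - m·g·e₃ - m·a(t₀) - γ·ṙ(t₀) holds with ⟪a(t₀), e₃⟫ = 0, m, g, γ > 0. If moreover z is C² near t₀, then z(t) < 0 for t slightly greater than t₀; in particular the solution leaves the set {z ≥ 0} immediately after t₀. -/
import Mathlib


open scoped RealInnerProductSpace

theorem stmt_9 (m g γ : ℝ) (hm : 0 < m) (hg : 0 < g) (hγ : 0 < γ)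
    (r a : ℝ → EuclideanSpace ℝ (Fin 3)) (lam : ℝ → ℝ)
    (e₃ : EuclideanSpace ℝ (Fin 3)) (he₃ : e₃ = EuclideanSpace.single 2 1)
    (hsphere : ∀ t, ‖r t‖ = 1)
    (z : ℝ → ℝ) (hzdef : ∀ t, z t = ⟪r t, e₃⟫)
    (t₀ : ℝ) (hz0 : z t₀ = 0) (hz1 : deriv z t₀ = 0)
    (hzC2 : ContDiffAt ℝ 2 z t₀)
    (hr1 : Differentiable ℝ r) (hr2 : Differentiable ℝ (deriv r))
    (heq : m • deriv (deriv r) t₀ =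
      lam t₀ • r t₀ - (m * g) • e₃ - m • a t₀ - γ • deriv r t₀)
    (ha : ⟪a t₀, e₃⟫ = 0) :
    ∃ δ > 0, ∀ t ∈ Set.Ioo t₀ (t₀ + δ), z t < 0 := by
  -- z is differentiable with deriv z t = ⟪deriv r t, e₃⟫
  have hzfun : z = fun t => ⟪r t, e₃⟫ := funext hzdef
  have hd1 : ∀ t, HasDerivAt z ⟪deriv r t, e₃⟫ t := by
    intro t
    rw [hzfun]
    simpa using ((hr1 t).hasDerivAt.inner ℝ (hasDerivAt_const t e₃))
  have hzdiff : Differentiable ℝ z := fun t => (hd1 t).differentiableAt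
  have hderivz : deriv z = fun t => ⟪deriv r t, e₃⟫ := funext fun t => (hd1 t).deriv
  -- inner values at t₀
  have hin0 : ⟪r t₀, e₃⟫ = 0 := by rw [← hzdef]; exact hz0
  have hin1 : ⟪deriv r t₀, e₃⟫ = 0 := by rw [← (hd1 t₀).deriv]; exact hz1
  have hee : ⟪e₃, e₃⟫ = 1 := by
    rw [he₃, EuclideanSpace.inner_single_left]
    simp
  -- second derivative of z at t₀ equals -g
  have hin2 : ⟪deriv (deriv r) t₀, e₃⟫ = -g := by
    have h := congrArg (fun v : EuclideanSpace ℝ (Fin 3) => ⟪v, e₃⟫) heq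
    simp only [inner_sub_left, real_inner_smul_left, hin0, hin1, ha, hee,
      mul_zero, mul_one, zero_sub, sub_zero] at h
    exact mul_left_cancel₀ hm.ne' (by linarith)
  have hd2 : HasDerivAt (deriv z) (-g) t₀ := by
    rw [hderivz]
    have := ((hr2 t₀).hasDerivAt.inner ℝ (hasDerivAt_const t₀ e₃))
    simpa [hin2] using this
  -- deriv z is negative just right of t₀
  have hslope : Filter.Tendsto (slope (deriv z) t₀) (nhdsWithin t₀ (Set.Ioi t₀)) (nhds (-g)) := by
    have := (hasDerivAt_iff_tendsto_slope.mp hd2)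
    exact this.mono_left (nhdsWithin_mono _ fun x hx => ne_of_gt hx)
  have hneg : ∀ᶠ t in nhdsWithin t₀ (Set.Ioi t₀), slope (deriv z) t₀ t < 0 := by
    have : Set.Iio (0:ℝ) ∈ nhds (-g) := Iio_mem_nhds (by linarith)
    exact hslope.eventually_mem this
  obtain ⟨u, hu, hsub⟩ := mem_nhdsGT_iff_exists_Ioo_subset.mp
    (hneg.and (eventually_mem_nhdsWithin))
  set δ := u - t₀ with hδ
  have hδpos : 0 < δ := sub_pos.mpr hu
  refine ⟨δ, hδpos, fun t ht => ?_⟩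
  have huu : t₀ + δ = u := by ring
  rw [huu] at ht
  -- deriv z < 0 on Ioo t₀ u
  have hFneg : ∀ s ∈ Set.Ioo t₀ u, deriv z s < 0 := by
    intro s hs
    obtain ⟨hsl, hsm⟩ := hsub hs
    have hst : t₀ < s := hsm
    have : slope (deriv z) t₀ s = deriv z s / (s - t₀) := by
      rw [slope_def_field, hz1]; ring
    rw [this] at hsl
    by_contra hcon
    push_neg at hcon
    have : 0 ≤ deriv z s / (s - t₀) := div_nonneg hcon (by linarith)
    linarith
  -- z strictly decreasing on [t₀, u]
  have hanti : StrictAntiOn z (Set.Icc t₀ u) := by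
    apply strictAntiOn_of_deriv_neg (convex_Icc t₀ u) hzdiff.continuous.continuousOn
    intro x hx
    rw [interior_Icc] at hx
    exact hFneg x hx
  have := hanti ⟨le_refl t₀, le_of_lt hu⟩ ⟨le_of_lt ht.1, le_of_lt ht.2⟩ ht.1
  rw [hz0] at this
  exact this
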